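/- Let N ≥ 1, let F : ℝ^N → ℝ be twice continuously differentiable and let G : ℝ^N → ℝ be continuously differentiable, and let v ∈ ℝ^N be such that the Hessian matrix Hess F(v) is invertible. Then ∇Ṽ(v) = 0 if and only if v = ∇G(∇F(v)), i.e. v is a stationary point of the dual potential Ṽ if and only if (∇F(v), v) is a fixed point of the density-evolution equations u = ∇F(v), v = ∇G(u). -/

import Mathlib

open scoped InnerProductSpace

/-!
Differentiating `Ṽ(w) = ⟪∇F w, w⟫ - G (∇F w) - F w` at `v`, the terms `⟪∇F v, ·⟫` coming from
the inner product and from `F` cancel, leaving `∇Ṽ(v) = (Hess F v)† (v - ∇G (∇F v))`. Since the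
Hessian is surjective, its adjoint is injective, so `∇Ṽ(v) = 0` exactly when `v = ∇G (∇F v)`.
-/

theorem ContinuousLinearMap.adjoint_injective_of_surjective {𝕜 E F : Type*} [RCLike 𝕜]
    [NormedAddCommGroup E] [InnerProductSpace 𝕜 E] [CompleteSpace E]
    [NormedAddCommGroup F] [InnerProductSpace 𝕜 F] [CompleteSpace F]
    {T : E →L[𝕜] F} (hT : Function.Surjective T) : Function.Injective (adjoint T) := by
  refine LinearMap.ker_eq_bot.mp ?_
  rw [← T.orthogonal_range, LinearMap.range_eq_top.mpr hT, Submodule.top_orthogonal_eq_bot]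

section DualPotential

variable {E : Type*} [NormedAddCommGroup E] [InnerProductSpace ℝ E] [CompleteSpace E]

theorem ContDiff.gradient {F : E → ℝ} {n : WithTop ℕ∞} (hF : ContDiff ℝ (n + 1) F) :
    ContDiff ℝ n (gradient F) :=
  (InnerProductSpace.toDual ℝ E).symm.contDiff.comp (hF.fderiv_right le_rfl)

noncomputable def dualPotential (F G : E → ℝ) (w : E) : ℝ :=
  ⟪gradient F w, w⟫_ℝ - G (gradient F w) - F w

theorem hasGradientAt_dualPotential {F G : E → ℝ} {v : E} {H : E →L[ℝ] E}
    (hF : DifferentiableAt ℝ F v) (hH : HasFDerivAt (gradient F) H v)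
    (hG : DifferentiableAt ℝ G (gradient F v)) :
    HasGradientAt (dualPotential F G)
      (ContinuousLinearMap.adjoint H (v - gradient G (gradient F v))) v := by
  rw [hasGradientAt_iff_hasFDerivAt]
  refine (((hH.inner ℝ (hasFDerivAt_id v)).sub
    (hG.hasGradientAt.hasFDerivAt.comp v hH)).sub hF.hasGradientAt.hasFDerivAt).congr_fderiv ?_
  ext h
  simp only [sub_apply, id_eq, ContinuousLinearMap.comp_apply,
    ContinuousLinearMap.prod_apply, ContinuousLinearMap.id_apply, fderivInnerCLM_apply,
    InnerProductSpace.toDual_apply_apply, ContinuousLinearMap.adjoint_inner_left, inner_sub_left,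
    real_inner_comm (H h) v]
  ring

end DualPotential

theorem stmt_5_general (N : ℕ)
    (F G : EuclideanSpace ℝ (Fin N) → ℝ)
    (hF : ContDiff ℝ 2 F) (hG : ContDiff ℝ 1 G)
    (v : EuclideanSpace ℝ (Fin N))
    (hinv : Function.Bijective (fderiv ℝ (gradient F) v)) :
    gradient (fun w => ⟪gradient F w, w⟫_ℝ - G (gradient F w) - F w) v = 0
      ↔ v = gradient G (gradient F v) := by
  have hgradV := hasGradientAt_dualPotential (G := G) (hF.differentiable two_ne_zero v)
    ((ContDiff.gradient (n := 1) hF).differentiable one_ne_zero v).hasFDerivAt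
    (hG.differentiable one_ne_zero _)
  change gradient (dualPotential F G) v = 0 ↔ _
  rw [hgradV.gradient, ← sub_eq_zero (a := v)]
  exact (ContinuousLinearMap.adjoint_injective_of_surjective hinv.2).eq_iff' (map_zero _)

/-- For `F` twice continuously differentiable and `G` continuously
differentiable on `ℝ^N`, if the Hessian `Hess F(v) = D(∇F)(v)` is invertible
(bijective as a linear map), then `v` is a stationary point of the dual
potential `Ṽ(v) = ⟪∇F(v), v⟫ − G(∇F(v)) − F(v)` if and only if
`v = ∇G(∇F(v))`, i.e. `(∇F(v), v)` is a fixed point of the density-evolution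
equations `u = ∇F(v)`, `v = ∇G(u)`. -/
theorem stmt_5 (N : ℕ) (hN : 1 ≤ N)
    (F G : EuclideanSpace ℝ (Fin N) → ℝ)
    (hF : ContDiff ℝ 2 F) (hG : ContDiff ℝ 1 G)
    (v : EuclideanSpace ℝ (Fin N))
    (hinv : Function.Bijective (fderiv ℝ (gradient F) v)) :
    gradient (fun w => ⟪gradient F w, w⟫_ℝ - G (gradient F w) - F w) v = 0
      ↔ v = gradient G (gradient F v) :=
  stmt_5_general N F G hF hG v hinv
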